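/- arXiv:math/9709209 — 2 statements merged into one kernel-verified Lean document; each statement's English description precedes it below -/
import Mathlib

section
/- Let T be a compact operator on H and let α ∈ ℂ with |α| ≤ 1. Then |α χ(T) − χ(α T)| ≤ ν(T). -/
/-!
A compact operator has only finitely many eigenvalues of modulus at least `ε > 0`: eigenvectors
for infinitely many of them, orthonormalised by Gram–Schmidt, form a basis in which `T` is upper
triangular, so the unit vectors `e n` satisfy `‖T e n - T e m‖ ≥ |⟪e n, T e n - T e m⟫| = |μ n| ≥ ε`
for `m < n`, which is impossible in the compact closure of `T '' closedBall 0 1`.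
Hence `χ` and `ν` are finite sums, and `χ(T)` only depends on the algebraic multiplicities, not on
the enumeration. Since `α • l` enumerates the eigenvalues of `α • T`, the difference
`α χ(T) - χ(α T)` is the sum of the `α λₙ` with `|λₙ| ≥ 1 > |α λₙ|`: at most `ν(T)` terms, each of
modulus less than `1`.
-/

noncomputable section

open Set Filter

variable {E : Type*} [NormedAddCommGroup E] [InnerProductSpace ℂ E] [CompleteSpace E]

/-- The algebraic multiplicity of `z` as an eigenvalue of `T`: the dimension of the
generalized eigenspace `⋃_k ker (T - z)^k`. -/
noncomputable def algMult (T : E →L[ℂ] E) (z : ℂ) : ℕ :=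
  Module.finrank ℂ ↥(⨆ k : ℕ, LinearMap.ker (((T - z • (1 : E →L[ℂ] E)) ^ k : E →L[ℂ] E) : E →ₗ[ℂ] E))

/-- `l` is an eigenvalue sequence for `T`: the eigenvalues of `T` repeated according to
algebraic multiplicity, arranged with `‖l n‖` nonincreasing, extended by zeros. -/
def IsEigenvalueSeq (T : E →L[ℂ] E) (l : ℕ → ℂ) : Prop :=
  Antitone (fun n => ‖l n‖) ∧
  ∀ z : ℂ, z ≠ 0 → ({n | l n = z}.Finite ∧ {n | l n = z}.ncard = algMult T z)

/-- `s` is the singular value sequence of `T`: the eigenvalue sequence of `|T| = (T^*T)^{1/2}`. -/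
def IsSingularValueSeq (T : E →L[ℂ] E) (s : ℕ → ℝ) : Prop :=
  (∀ n, 0 ≤ s n) ∧
  ∃ A : E →L[ℂ] E, A.IsPositive ∧ A * A = ContinuousLinearMap.adjoint T * T ∧
    IsEigenvalueSeq A (fun n => (s n : ℂ))

/-- ν: the number of terms of the sequence of absolute value at least 1. -/
noncomputable def nuSeq (l : ℕ → ℂ) : ℕ := {n | 1 ≤ ‖l n‖}.ncard

/-- μ: the sum of `log₊` of the absolute values. -/
noncomputable def muSeq (l : ℕ → ℂ) : ℝ := ∑' n, max (Real.log ‖l n‖) 0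

/-- μ for a real (singular value) sequence. -/
noncomputable def muSeqR (s : ℕ → ℝ) : ℝ := ∑' n, max (Real.log (s n)) 0

/-- χ: the sum of the terms of absolute value at least 1. -/
noncomputable def chiSeq (l : ℕ → ℂ) : ℂ := ∑' n, if 1 ≤ ‖l n‖ then l n else 0

open Module End Submodule

section Flag

variable {ι R M : Type*} [PartialOrder ι] [CommRing R] [AddCommGroup M] [Module R M]

theorem Module.End.apply_sub_smul_mem_span_Iio {f : End R M} {v : ι → M} {μ : ι → R}
    (hv : ∀ i, f (v i) = μ i • v i) {k : ι} {x : M} (hx : x ∈ span R (v '' Iic k)) :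
    f x - μ k • x ∈ span R (v '' Iio k) := by
  suffices span R (v '' Iic k) ≤ (span R (v '' Iio k)).comap (f - μ k • 1) from this hx
  refine span_le.mpr ?_
  rintro _ ⟨i, hik, rfl⟩
  have hvi : (f - μ k • 1) (v i) = (μ i - μ k) • v i := by
    simp [hv i, sub_smul]
  rcases hik.lt_or_eq with hik | rfl
  · simpa [hvi] using smul_mem _ (μ i - μ k) (subset_span (mem_image_of_mem v (mem_Iio.mpr hik)))
  · simp [hvi]

theorem Module.End.apply_mem_span_Iic {f : End R M} {v : ι → M} {μ : ι → R}
    (hv : ∀ i, f (v i) = μ i • v i) {k : ι} {x : M} (hx : x ∈ span R (v '' Iic k)) :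
    f x ∈ span R (v '' Iic k) := by
  have h := span_mono (image_mono Iio_subset_Iic_self) (apply_sub_smul_mem_span_Iio hv hx)
  simpa using add_mem h (smul_mem _ (μ k) hx)

end Flag

namespace InnerProductSpace

variable {ι 𝕜 F : Type*} [LinearOrder ι] [LocallyFiniteOrderBot ι] [WellFoundedLT ι] [RCLike 𝕜]
  [NormedAddCommGroup F] [InnerProductSpace 𝕜 F]

theorem gramSchmidtNormed_mem_span_Iic (v : ι → F) (k : ι) :
    gramSchmidtNormed 𝕜 v k ∈ span 𝕜 (v '' Iic k) := by
  rw [← span_gramSchmidt_Iic 𝕜, ← span_gramSchmidtNormed]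
  exact subset_span (mem_image_of_mem _ (mem_Iic.mpr le_rfl))

theorem inner_gramSchmidtNormed_eq_zero_of_mem_span_Iio {v : ι → F} (hv : LinearIndependent 𝕜 v)
    {k : ι} {x : F} (hx : x ∈ span 𝕜 (v '' Iio k)) : inner 𝕜 (gramSchmidtNormed 𝕜 v k) x = 0 := by
  rw [← span_gramSchmidt_Iio 𝕜, ← span_gramSchmidtNormed] at hx
  suffices span 𝕜 (gramSchmidtNormed 𝕜 v '' Iio k) ≤ (𝕜 ∙ gramSchmidtNormed 𝕜 v k)ᗮ from
    mem_orthogonal_singleton_iff_inner_right.mp (this hx)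
  refine span_le.mpr ?_
  rintro _ ⟨i, hik, rfl⟩
  exact mem_orthogonal_singleton_iff_inner_right.mpr
    ((gramSchmidtNormed_orthonormal hv).2 (ne_of_gt hik))

theorem norm_le_norm_apply_gramSchmidtNormed_sub {f : End 𝕜 F} {v : ι → F} {μ : ι → 𝕜}
    (hli : LinearIndependent 𝕜 v) (hv : ∀ i, f (v i) = μ i • v i) {i j : ι} (hij : i < j) :
    ‖μ j‖ ≤ ‖f (gramSchmidtNormed 𝕜 v j) - f (gramSchmidtNormed 𝕜 v i)‖ := by
  set e := gramSchmidtNormed 𝕜 v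
  have hej : f (e j) - μ j • e j ∈ span 𝕜 (v '' Iio j) :=
    apply_sub_smul_mem_span_Iio hv (gramSchmidtNormed_mem_span_Iic v j)
  have hei : f (e i) ∈ span 𝕜 (v '' Iio j) :=
    span_mono (image_mono (Iic_subset_Iio.mpr hij))
      (apply_mem_span_Iic hv (gramSchmidtNormed_mem_span_Iic v i))
  have hunit : ‖e j‖ = 1 := gramSchmidtNormed_unit_length _ hli
  have hinner : inner 𝕜 (e j) (f (e j) - f (e i)) = μ j := by
    have hdecomp : f (e j) - f (e i) = μ j • e j + ((f (e j) - μ j • e j) - f (e i)) := by abel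
    rw [hdecomp, inner_add_right, inner_smul_right, inner_self_eq_one_of_norm_eq_one hunit,
      inner_gramSchmidtNormed_eq_zero_of_mem_span_Iio hli (sub_mem hej hei), mul_one, add_zero]
  calc ‖μ j‖ = ‖inner 𝕜 (e j) (f (e j) - f (e i))‖ := by rw [hinner]
    _ ≤ ‖e j‖ * ‖f (e j) - f (e i)‖ := norm_inner_le_norm _ _
    _ = ‖f (e j) - f (e i)‖ := by rw [hunit, one_mul]

end InnerProductSpace

theorem IsCompact.exists_lt_dist_lt {X : Type*} [PseudoMetricSpace X] {K : Set X}
    (hK : IsCompact K) {x : ℕ → X} (hx : ∀ n, x n ∈ K) {ε : ℝ} (hε : 0 < ε) :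
    ∃ m n, m < n ∧ dist (x m) (x n) < ε := by
  obtain ⟨a, -, φ, hφ, hlim⟩ := hK.tendsto_subseq hx
  obtain ⟨N, hN⟩ := Metric.cauchySeq_iff'.mp hlim.cauchySeq ε hε
  exact ⟨φ N, φ (N + 1), hφ N.lt_succ_self, by simpa [dist_comm] using hN (N + 1) N.le_succ⟩

open InnerProductSpace in
theorem IsCompactOperator.finite_setOf_hasEigenvalue_le_norm {𝕜 F : Type*} [RCLike 𝕜]
    [NormedAddCommGroup F] [InnerProductSpace 𝕜 F] {T : End 𝕜 F} (hT : IsCompactOperator T)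
    {ε : ℝ} (hε : 0 < ε) : {μ | T.HasEigenvalue μ ∧ ε ≤ ‖μ‖}.Finite := by
  refine Set.not_infinite.mp fun hinf => ?_
  set μ : ℕ → 𝕜 := fun n => hinf.natEmbedding _ n
  have hμ : ∀ n, T.HasEigenvalue (μ n) ∧ ε ≤ ‖μ n‖ := fun n => (hinf.natEmbedding _ n).2
  choose v hv using fun n => (hμ n).1.exists_hasEigenvector
  have hli : LinearIndependent 𝕜 v := T.eigenvectors_linearIndependent' μ
    (fun m n h => (hinf.natEmbedding _).injective (Subtype.ext h)) v hv
  set e := gramSchmidtNormed 𝕜 v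
  have hmem : ∀ n, T (e n) ∈ closure (T '' Metric.closedBall 0 1) := fun n =>
    subset_closure ⟨e n, by simp [e, gramSchmidtNormed_unit_length n hli], rfl⟩
  obtain ⟨m, n, hmn, hdist⟩ :=
    (hT.isCompact_closure_image_closedBall 1).exists_lt_dist_lt hmem hε
  have hsep := norm_le_norm_apply_gramSchmidtNormed_sub hli (fun n => (hv n).apply_eq_smul) hmn
  rw [dist_eq_norm, norm_sub_rev] at hdist
  linarith [(hμ n).2]

open Finset in
theorem tsum_comp_eq_tsum_ncard_smul {ι β M : Type*} [AddCommMonoid M] [TopologicalSpace M]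
    (a : ι → β) (f : β → M) (h : (Function.support (f ∘ a)).Finite) :
    ∑' n, f (a n) = ∑' z, {n | a n = z}.ncard • f z := by
  classical
  set I := h.toFinset
  have hmem {n : ι} {z : β} (hn : a n = z) (hz : f z ≠ 0) : n ∈ I := by simpa [I, hn] using hz
  have hfiber {z : β} (hz : z ∈ I.image a) : {n | a n = z}.ncard = #{n ∈ I | a n = z} := by
    obtain ⟨n₀, hn₀, rfl⟩ := mem_image.mp hz
    have hfz : f (a n₀) ≠ 0 := by simpa [I] using hn₀
    rw [← ncard_coe_finset, coe_filter]
    congr 1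
    ext n
    exact ⟨fun hn => ⟨hmem hn hfz, hn⟩, And.right⟩
  rw [tsum_eq_sum (s := I) (fun n hn => by simpa [I] using hn), Finset.sum_comp,
    tsum_eq_sum (s := I.image a)]
  · exact Finset.sum_congr rfl fun z hz => by rw [hfiber hz]
  · intro z hz
    by_cases hfz : f z = 0
    · rw [hfz, smul_zero]
    have hempty : {n | a n = z} = ∅ :=
      eq_empty_of_forall_notMem fun n hn => hz (mem_image.mpr ⟨n, hmem hn hfz, hn⟩)
    rw [hempty, ncard_empty, zero_smul]

theorem Module.End.maxGenEigenspace_smul {K V : Type*} [Field K] [AddCommGroup V] [Module K V]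
    (f : End K V) {α : K} (hα : α ≠ 0) (μ : K) :
    (α • f).maxGenEigenspace (α * μ) = f.maxGenEigenspace μ := by
  ext x
  have hsmul : α • f - (α * μ) • 1 = α • (f - μ • 1) := by rw [smul_sub, smul_smul]
  simp only [mem_maxGenEigenspace, hsmul, smul_pow, LinearMap.smul_apply, smul_eq_zero,
    pow_ne_zero _ hα, false_or]

section Multiplicity

variable {F : Type*} [NormedAddCommGroup F] [InnerProductSpace ℂ F]

theorem algMult_eq_finrank_maxGenEigenspace (T : F →L[ℂ] F) (z : ℂ) :
    algMult T z = finrank ℂ (maxGenEigenspace (T : End ℂ F) z) := by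
  have hker (k : ℕ) : LinearMap.ker (((T - z • (1 : F →L[ℂ] F)) ^ k : F →L[ℂ] F) : F →ₗ[ℂ] F) =
      genEigenspace (T : End ℂ F) z k := by
    rw [genEigenspace_nat, ContinuousLinearMap.toLinearMap_pow, ContinuousLinearMap.toLinearMap_sub,
      ContinuousLinearMap.toLinearMap_smul, ContinuousLinearMap.toLinearMap_one]
  rw [algMult, ← iSup_genEigenspace_eq, iSup_congr hker]

theorem hasEigenvalue_of_algMult_ne_zero {T : F →L[ℂ] F} {z : ℂ} (h : algMult T z ≠ 0) :
    HasEigenvalue (T : End ℂ F) z := by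
  rw [algMult_eq_finrank_maxGenEigenspace] at h
  exact (hasUnifEigenvalue_iff_hasUnifEigenvalue_one ENat.top_pos).mp
    fun hbot => h (by rw [maxGenEigenspace, hbot, finrank_bot])

theorem algMult_zero {z : ℂ} (hz : z ≠ 0) : algMult (0 : F →L[ℂ] F) z = 0 := by
  by_contra h
  obtain ⟨v, hv⟩ := (hasEigenvalue_of_algMult_ne_zero h).exists_hasEigenvector
  have hzv : z • v = 0 := by simpa using hv.apply_eq_smul.symm
  exact hv.2 ((smul_eq_zero.mp hzv).resolve_left hz)

theorem algMult_smul (T : F →L[ℂ] F) {α : ℂ} (hα : α ≠ 0) (z : ℂ) :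
    algMult (α • T) (α * z) = algMult T z := by
  rw [algMult_eq_finrank_maxGenEigenspace, algMult_eq_finrank_maxGenEigenspace,
    ContinuousLinearMap.toLinearMap_smul, maxGenEigenspace_smul _ hα]

namespace IsEigenvalueSeq

variable {T : F →L[ℂ] F} {l : ℕ → ℂ}

theorem hasEigenvalue (hl : IsEigenvalueSeq T l) {n : ℕ} (hn : l n ≠ 0) :
    HasEigenvalue (T : End ℂ F) (l n) := by
  obtain ⟨hfin, hcard⟩ := hl.2 (l n) hn
  exact hasEigenvalue_of_algMult_ne_zero (hcard ▸ (ncard_pos hfin).mpr ⟨n, rfl⟩).ne'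

theorem finite_setOf_le_norm (hl : IsEigenvalueSeq T l) (hT : IsCompactOperator T) {ε : ℝ}
    (hε : 0 < ε) : {n | ε ≤ ‖l n‖}.Finite := by
  have hne {z : ℂ} (hz : ε ≤ ‖z‖) : z ≠ 0 := norm_pos_iff.mp (hε.trans_le hz)
  refine ((hT.finite_setOf_hasEigenvalue_le_norm (T := (T : End ℂ F)) hε).biUnion
    fun z hz => (hl.2 z (hne hz.2)).1).subset fun n hn => ?_
  exact mem_biUnion ⟨hl.hasEigenvalue (hne hn), hn⟩ rfl

theorem smul (hl : IsEigenvalueSeq T l) (α : ℂ) : IsEigenvalueSeq (α • T) (α • l) := by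
  refine ⟨fun m n hmn => ?_, fun z hz => ?_⟩
  · simpa only [Pi.smul_apply, smul_eq_mul, norm_mul] using
      mul_le_mul_of_nonneg_left (hl.1 hmn) (norm_nonneg α)
  rcases eq_or_ne α 0 with rfl | hα
  · have hempty : {n | ((0 : ℂ) • l) n = z} = ∅ := by simp [hz.symm]
    rw [hempty, zero_smul, algMult_zero hz]
    exact ⟨finite_empty, ncard_empty _⟩
  obtain ⟨w, rfl⟩ : ∃ w, z = α * w := ⟨α⁻¹ * z, (mul_inv_cancel_left₀ hα z).symm⟩
  simp only [Pi.smul_apply, smul_eq_mul, mul_right_inj' hα, algMult_smul T hα]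
  exact hl.2 w (right_ne_zero_of_mul hz)

theorem chiSeq_eq {l' : ℕ → ℂ} (hl : IsEigenvalueSeq T l) (hl' : IsEigenvalueSeq T l')
    (hT : IsCompactOperator T) : chiSeq l = chiSeq l' := by
  set g : ℂ → ℂ := fun z => if 1 ≤ ‖z‖ then z else 0
  have hsupp {m : ℕ → ℂ} (hm : IsEigenvalueSeq T m) : (Function.support (g ∘ m)).Finite :=
    (hm.finite_setOf_le_norm hT one_pos).subset fun n hn => by_contra fun h => hn (if_neg h)
  change ∑' n, g (l n) = ∑' n, g (l' n)
  rw [tsum_comp_eq_tsum_ncard_smul l g (hsupp hl), tsum_comp_eq_tsum_ncard_smul l' g (hsupp hl')]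
  refine tsum_congr fun z => ?_
  by_cases hz : 1 ≤ ‖z‖
  · have hz0 : z ≠ 0 := norm_pos_iff.mp (one_pos.trans_le hz)
    rw [(hl.2 z hz0).2, (hl'.2 z hz0).2]
  · simp [g, hz]

end IsEigenvalueSeq

end Multiplicity

theorem norm_mul_chiSeq_sub_chiSeq_smul_le {l : ℕ → ℂ} (hl : {n | 1 ≤ ‖l n‖}.Finite) {α : ℂ}
    (hα : ‖α‖ ≤ 1) : ‖α * chiSeq l - chiSeq (α • l)‖ ≤ nuSeq l := by
  set I := hl.toFinset
  set g : ℂ → ℂ := fun z => if 1 ≤ ‖z‖ then z else 0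
  have hnorm_le (z : ℂ) : ‖α * z‖ ≤ ‖z‖ := by
    simpa [norm_mul] using mul_le_mul_of_nonneg_right hα (norm_nonneg z)
  have hχ : chiSeq l = ∑ n ∈ I, g (l n) :=
    tsum_eq_sum fun n hn => if_neg (by simpa [I] using hn)
  have hχα : chiSeq (α • l) = ∑ n ∈ I, g (α * l n) :=
    tsum_eq_sum fun n hn => if_neg fun h => hn (by simpa [I] using h.trans (hnorm_le (l n)))
  have hterm {z : ℂ} (hz : 1 ≤ ‖z‖) : ‖α * g z - g (α * z)‖ ≤ 1 := by
    by_cases h : 1 ≤ ‖α * z‖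
    · simp only [g, if_pos hz, if_pos h, sub_self, norm_zero, zero_le_one]
    · simpa only [g, if_pos hz, if_neg h, sub_zero] using (not_le.mp h).le
  calc ‖α * chiSeq l - chiSeq (α • l)‖ = ‖∑ n ∈ I, (α * g (l n) - g (α * l n))‖ := by
        rw [hχ, hχα, Finset.mul_sum, Finset.sum_sub_distrib]
    _ ≤ ∑ n ∈ I, ‖α * g (l n) - g (α * l n)‖ := norm_sum_le _ _
    _ ≤ ∑ n ∈ I, 1 := Finset.sum_le_sum fun n hn => hterm (by simpa [I] using hn)
    _ = nuSeq l := by simp [I, nuSeq, ncard_eq_toFinset_card _ hl]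

theorem chi_smul_le_general
    (T : E →L[ℂ] E) (hT : IsCompactOperator ⇑T)
    (α : ℂ) (hα : ‖α‖ ≤ 1)
    (l : ℕ → ℂ) (hl : IsEigenvalueSeq T l)
    (lα : ℕ → ℂ) (hlα : IsEigenvalueSeq (α • T) lα) :
    ‖α * chiSeq l - chiSeq lα‖ ≤ (nuSeq l : ℝ) := by
  rw [hlα.chiSeq_eq (hl.smul α) (hT.smul α)]
  exact norm_mul_chiSeq_sub_chiSeq_smul_le (hl.finite_setOf_le_norm hT one_pos) hα

/-- If `T` is compact and `|α| ≤ 1`, then `|α χ(T) − χ(α T)| ≤ ν(T)`. -/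
theorem chi_smul_le
    [TopologicalSpace.SeparableSpace E] (hinf : ¬ FiniteDimensional ℂ E)
    (T : E →L[ℂ] E) (hT : IsCompactOperator ⇑T)
    (α : ℂ) (hα : ‖α‖ ≤ 1)
    (l : ℕ → ℂ) (hl : IsEigenvalueSeq T l)
    (lα : ℕ → ℂ) (hlα : IsEigenvalueSeq (α • T) lα) :
    ‖α * chiSeq l - chiSeq lα‖ ≤ (nuSeq l : ℝ) :=
  chi_smul_le_general T hT α hα l hl lα hlα

end
end

section
/- Let φ : ℝ → ℝ be a nondecreasing C^∞ function with φ(x) = 0 for x ≤ 0 and φ(x) = 1 for x ≥ 1, and let ψ : ℝ → ℝ be a C² function with ψ(x) = 0 for x ≤ 0 and ψ''(x) = e^x (|φ''(x)| + 2|φ'(x)|) for x ≥ 0. Define h : ℂ → ℝ by h(0) = 0 and h(z) = ψ(log|z|) − (Re z) φ(log|z|) for z ≠ 0. Then h is subharmonic on ℂ. -/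
noncomputable section

open Set Filter

variable {E : Type*} [NormedAddCommGroup E] [InnerProductSpace ℂ E] [CompleteSpace E]

/-- A continuous function `ℂ → ℝ` is subharmonic when it satisfies the sub-mean-value
inequality on every circle. -/
def Subharmonic (f : ℂ → ℝ) : Prop :=
  Continuous f ∧ ∀ (z : ℂ) (r : ℝ), 0 < r →
    f z ≤ (2 * Real.pi)⁻¹ *
      ∫ θ in (0:ℝ)..(2 * Real.pi), f (z + (r : ℂ) * Complex.exp (θ * Complex.I))

/-!
A `C²` function `f` with `Δf ≥ 0` satisfies the sub-mean-value inequality: if `M s` is the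
integral of `f` over the circle of radius `s` about `z`, then differentiating under the integral
and integrating by parts in the angle give `(s M'(s))' = s ∫ Δf ≥ 0`, so `s M'(s) ≥ 0` and `M` is
nondecreasing on `[0, ∞)`.

The function `h` vanishes on the open unit disc, because `log |z| ≤ 0` there, and elsewhere it is
`ψ(t) - (Re z) φ(t)` with `t = log |z|`; hence it is `C²`. Computing second derivatives along the
lines through `z` in the directions `1` and `i` gives
`Δh(z) = (ψ''(t) - Re z (φ''(t) + 2 φ'(t))) / |z|²`, which is nonnegative because
`ψ''(t) = eᵗ (|φ''(t)| + 2 |φ'(t)|)` and `|Re z| ≤ |z| = eᵗ`.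
-/

open Laplacian
open scoped Real Topology InnerProductSpace
open Complex (I)

theorem hasDerivAt_intervalIntegral_of_continuous {F : Type*} [NormedAddCommGroup F]
    [NormedSpace ℝ F] [CompleteSpace F] {G G' : ℝ → ℝ → F} {a b : ℝ}
    (hG : ∀ s θ, HasDerivAt (G · θ) (G' s θ) s) (hGc : ∀ s, Continuous (G s))
    (hG' : Continuous (Function.uncurry G')) (s₀ : ℝ) :
    HasDerivAt (fun s => ∫ θ in a..b, G s θ) (∫ θ in a..b, G' s₀ θ) s₀ := by
  obtain ⟨C, hC⟩ := ((isCompact_closedBall s₀ 1).prod isCompact_uIcc).exists_bound_of_continuousOn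
    hG'.continuousOn
  refine (intervalIntegral.hasDerivAt_integral_of_dominated_loc_of_deriv_le
    (bound := fun _ => C) (Metric.ball_mem_nhds s₀ one_pos)
    (.of_forall fun s => (hGc s).aestronglyMeasurable) ((hGc s₀).intervalIntegrable _ _)
    (hG'.comp (Continuous.prodMk_right s₀)).aestronglyMeasurable ?_ intervalIntegrable_const
    (.of_forall fun θ _ s _ => hG s θ)).2
  exact .of_forall fun θ hθ s hs =>
    hC (s, θ) ⟨Metric.ball_subset_closedBall hs, Ioc_subset_Icc_self hθ⟩

theorem monotoneOn_Ici_of_hasDerivAt_of_nonneg {g g' : ℝ → ℝ} (hg : ∀ s, HasDerivAt g (g' s) s)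
    (hg' : ∀ s, 0 < s → 0 ≤ g' s) : MonotoneOn g (Ici 0) := by
  have hdiff : Differentiable ℝ g := fun s => (hg s).differentiableAt
  refine monotoneOn_of_deriv_nonneg (convex_Ici 0) hdiff.continuous.continuousOn
    hdiff.differentiableOn fun s hs => ?_
  rw [interior_Ici] at hs
  exact (hg s).deriv ▸ hg' s hs

theorem hasDerivAt_circleMap_radius (z : ℂ) (s θ : ℝ) :
    HasDerivAt (fun s => circleMap z s θ) (Complex.exp (θ * I)) s := by
  simpa [circleMap] using ((Complex.ofRealCLM.hasDerivAt (x := s)).mul_const _).const_add z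

theorem ContinuousLinearMap.apply_exp_mul_I_add_apply_exp_mul_I_mul_I
    (B : ℂ →L[ℝ] ℂ →L[ℝ] ℝ) (θ : ℝ) :
    B (Complex.exp (θ * I)) (Complex.exp (θ * I)) +
      B (Complex.exp (θ * I) * I) (Complex.exp (θ * I) * I) = B 1 1 + B I I := by
  have he : Complex.exp (θ * I) = Real.cos θ • (1 : ℂ) + Real.sin θ • I := by
    rw [Complex.exp_mul_I]
    simp [Complex.ofReal_cos, Complex.ofReal_sin]
  have heI : Complex.exp (θ * I) * I = (-Real.sin θ) • (1 : ℂ) + Real.cos θ • I := by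
    rw [he]
    simp only [Complex.real_smul, Complex.ofReal_cos, Complex.ofReal_sin, mul_one, add_mul,
      mul_assoc, Complex.I_mul_I, mul_neg, neg_smul]
    ring
  rw [heI, he]
  simp only [map_add, map_smul, add_apply, smul_apply, smul_eq_mul]
  linear_combination (B 1 1 + B I I) * Real.sin_sq_add_cos_sq θ

section CircleAverage

variable {f : ℂ → ℝ} {D : ℂ → ℂ →L[ℝ] ℝ} {D₂ : ℂ → ℂ →L[ℝ] ℂ →L[ℝ] ℝ}

/-- `θ ↦ D (circleMap z s θ) (s e^{iθ} i)` is `2π`-periodic with θ-derivative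
`s² D₂ (…) (e^{iθ} i) (e^{iθ} i) - s D (…) e^{iθ}`, so the latter integrates to zero over a
period. -/
theorem mul_integral_radial_eq_sq_mul_integral_tangential (hD₂ : ∀ w, HasFDerivAt D (D₂ w) w)
    (hD₂c : Continuous D₂) (z : ℂ) (s : ℝ) :
    s * ∫ θ in 0..2 * π, D (circleMap z s θ) (Complex.exp (θ * I)) =
      s ^ 2 * ∫ θ in 0..2 * π,
        D₂ (circleMap z s θ) (Complex.exp (θ * I) * I) (Complex.exp (θ * I) * I) := by
  have hDc : Continuous D := continuous_iff_continuousAt.2 fun w => (hD₂ w).continuousAt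
  have hT : ∀ θ, HasDerivAt (fun θ => D (circleMap z s θ) (circleMap 0 s θ * I))
      (s ^ 2 * D₂ (circleMap z s θ) (Complex.exp (θ * I) * I) (Complex.exp (θ * I) * I) -
        s * D (circleMap z s θ) (Complex.exp (θ * I))) θ := by
    intro θ
    refine (((hD₂ _).comp_hasDerivAt θ (hasDerivAt_circleMap z s θ)).clm_apply
      ((hasDerivAt_circleMap 0 s θ).mul_const I)).congr_deriv ?_
    simp only [Function.comp_apply, circleMap_zero, ← Complex.real_smul, smul_mul_assoc,
      map_smul, smul_apply, smul_eq_mul, mul_assoc, Complex.I_mul_I, mul_neg_one, map_neg]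
    ring
  have hint := intervalIntegral.integral_eq_sub_of_hasDerivAt (a := 0) (b := 2 * π)
    (fun θ _ => hT θ) (Continuous.intervalIntegrable (by fun_prop) _ _)
  rw [intervalIntegral.integral_sub (Continuous.intervalIntegrable (by fun_prop) _ _)
    (Continuous.intervalIntegrable (by fun_prop) _ _), intervalIntegral.integral_const_mul,
    intervalIntegral.integral_const_mul] at hint
  have hper : circleMap z s (2 * π) = circleMap z s 0 := by
    simpa using periodic_circleMap z s 0
  have hper₀ : circleMap 0 s (2 * π) = circleMap 0 s 0 := by
    simpa using periodic_circleMap 0 s 0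
  rw [hper, hper₀, sub_self, sub_eq_zero] at hint
  exact hint.symm

theorem monotoneOn_circleAverage_of_hasFDerivAt (hD : ∀ w, HasFDerivAt f (D w) w)
    (hD₂ : ∀ w, HasFDerivAt D (D₂ w) w) (hD₂c : Continuous D₂)
    (hΔ : ∀ w, 0 ≤ D₂ w 1 1 + D₂ w I I) (z : ℂ) :
    MonotoneOn (Real.circleAverage f z) (Ici 0) := by
  have hfc : Continuous f := continuous_iff_continuousAt.2 fun w => (hD w).continuousAt
  have hDc : Continuous D := continuous_iff_continuousAt.2 fun w => (hD₂ w).continuousAt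
  set M₁ : ℝ → ℝ := fun s => ∫ θ in 0..2 * π, D (circleMap z s θ) (Complex.exp (θ * I))
  set M₂ : ℝ → ℝ := fun s => ∫ θ in 0..2 * π,
    D₂ (circleMap z s θ) (Complex.exp (θ * I)) (Complex.exp (θ * I))
  set Q : ℝ → ℝ := fun s => ∫ θ in 0..2 * π,
    D₂ (circleMap z s θ) (Complex.exp (θ * I) * I) (Complex.exp (θ * I) * I)
  have hM : ∀ s, HasDerivAt (fun s => ∫ θ in 0..2 * π, f (circleMap z s θ)) (M₁ s) s :=
    hasDerivAt_intervalIntegral_of_continuous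
      (fun s θ => (hD _).comp_hasDerivAt s (hasDerivAt_circleMap_radius z s θ))
      (fun s => by fun_prop) (by fun_prop)
  have hM₁ : ∀ s, HasDerivAt M₁ (M₂ s) s :=
    hasDerivAt_intervalIntegral_of_continuous
      (fun s θ => ((hD₂ _).comp_hasDerivAt s (hasDerivAt_circleMap_radius z s θ)).clm_apply
        (hasDerivAt_const _ _) |>.congr_deriv (by simp))
      (fun s => by fun_prop) (by fun_prop)
  have hQM₂ : ∀ s, 0 ≤ Q s + M₂ s := fun s => by
    rw [← intervalIntegral.integral_add (Continuous.intervalIntegrable (by fun_prop) _ _)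
      (Continuous.intervalIntegrable (by fun_prop) _ _)]
    refine intervalIntegral.integral_nonneg (by positivity) fun θ _ => ?_
    rw [add_comm, ContinuousLinearMap.apply_exp_mul_I_add_apply_exp_mul_I_mul_I]
    exact hΔ _
  have hsM₁ : MonotoneOn (fun s => s * M₁ s) (Ici 0) := by
    refine monotoneOn_Ici_of_hasDerivAt_of_nonneg (fun s => (hasDerivAt_id s).mul (hM₁ s))
      fun s hs => ?_
    have hM₁s : M₁ s = s * Q s := mul_left_cancel₀ hs.ne' <| by
      rw [mul_integral_radial_eq_sq_mul_integral_tangential hD₂ hD₂c z s]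
      ring
    rw [id, one_mul, hM₁s, ← mul_add]
    exact mul_nonneg hs.le (hQM₂ s)
  have hM₁_nonneg : ∀ s, 0 < s → 0 ≤ M₁ s := fun s hs =>
    nonneg_of_mul_nonneg_right (by simpa using hsM₁ self_mem_Ici hs.le hs.le) hs
  intro s hs t ht hst
  simp only [Real.circleAverage_def, smul_eq_mul]
  gcongr
  exact monotoneOn_Ici_of_hasDerivAt_of_nonneg hM hM₁_nonneg hs ht hst

theorem subharmonic_of_contDiff_of_laplacian_nonneg (hf : ContDiff ℝ 2 f)
    (hΔ : ∀ w, 0 ≤ Δ f w) : Subharmonic f := by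
  have hf' : ContDiff ℝ 1 (fderiv ℝ f) := hf.fderiv_right (by norm_num)
  have hΔ' : ∀ w, 0 ≤ fderiv ℝ (fderiv ℝ f) w 1 1 + fderiv ℝ (fderiv ℝ f) w I I := fun w => by
    simpa [InnerProductSpace.laplacian_eq_iteratedFDeriv_complexPlane,
      iteratedFDeriv_two_apply] using hΔ w
  refine ⟨hf.continuous, fun z r hr => ?_⟩
  have hmono := monotoneOn_circleAverage_of_hasFDerivAt
    (fun w => (hf.differentiable two_ne_zero w).hasFDerivAt)
    (fun w => (hf'.differentiable one_ne_zero w).hasFDerivAt) (hf'.continuous_fderiv one_ne_zero)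
    hΔ' z self_mem_Ici hr.le hr.le
  rwa [Real.circleAverage_zero] at hmono

end CircleAverage

theorem hasDerivAt_line {V : Type*} [NormedAddCommGroup V] [NormedSpace ℝ V] (w v : V) (t : ℝ) :
    HasDerivAt (fun t : ℝ => w + t • v) v t := by
  simpa using ((hasDerivAt_id t).smul_const v).const_add w

theorem iteratedFDeriv_two_apply_self_eq_of_hasDerivAt {V F : Type*} [NormedAddCommGroup V]
    [NormedSpace ℝ V] [NormedAddCommGroup F] [NormedSpace ℝ F] {f : V → F} {w v : V}
    {g' : ℝ → F} {a : F} (hf : ContDiffAt ℝ 2 f w)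
    (hg : ∀ᶠ t in 𝓝 0, HasDerivAt (fun t : ℝ => f (w + t • v)) (g' t) t)
    (hg' : HasDerivAt g' a 0) :
    iteratedFDeriv ℝ 2 f w ![v, v] = a := by
  have hline : Tendsto (fun t : ℝ => w + t • v) (𝓝 0) (𝓝 w) := by
    simpa using (hasDerivAt_line w v 0).continuousAt.tendsto
  have hdiff : ∀ᶠ t in 𝓝 (0 : ℝ), DifferentiableAt ℝ f (w + t • v) :=
    hline.eventually <| (hf.eventually (by simp)).mono fun x hx => hx.differentiableAt two_ne_zero
  have hg'_eq : g' =ᶠ[𝓝 0] fun t => fderiv ℝ f (w + t • v) v :=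
    (hg.and hdiff).mono fun t ⟨hgt, hft⟩ =>
      hgt.unique (hft.hasFDerivAt.comp_hasDerivAt t (hasDerivAt_line w v t))
  have hD : HasDerivAt (fun t : ℝ => fderiv ℝ f (w + t • v) v) (fderiv ℝ (fderiv ℝ f) w v v) 0 := by
    have hD₁ : HasFDerivAt (fderiv ℝ f) (fderiv ℝ (fderiv ℝ f) w) w :=
      ((hf.fderiv_right_succ (n := 1)).differentiableAt one_ne_zero).hasFDerivAt
    exact ((hD₁.comp_hasDerivAt_of_eq (0 : ℝ) (hasDerivAt_line w v 0) (by simp)).clm_apply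
      (hasDerivAt_const (0 : ℝ) v)).congr_deriv (by simp)
  rw [iteratedFDeriv_two_apply]
  exact (hg'.unique (hD.congr_of_eventuallyEq hg'_eq)).symm

section LogNorm

variable {V : Type*} [NormedAddCommGroup V] [InnerProductSpace ℝ V] {g : ℝ → ℝ} {w v : V}

theorem hasDerivAt_log_norm_line {t : ℝ} (h : w + t • v ≠ 0) :
    HasDerivAt (fun t : ℝ => Real.log ‖w + t • v‖) (⟪w + t • v, v⟫_ℝ / ‖w + t • v‖ ^ 2) t := by
  have hsq : (fun t : ℝ => Real.log ‖w + t • v‖) = fun t => Real.log (‖w + t • v‖ ^ 2) / 2 := by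
    ext t
    rw [Real.log_pow]
    ring
  rw [hsq]
  refine (((hasDerivAt_line w v t).norm_sq.log (by positivity)).div_const 2).congr_deriv ?_
  ring

theorem hasDerivAt_inner_div_norm_sq_line (hw : w ≠ 0) :
    HasDerivAt (fun t : ℝ => ⟪w + t • v, v⟫_ℝ / ‖w + t • v‖ ^ 2)
      ((‖v‖ ^ 2 * ‖w‖ ^ 2 - 2 * ⟪w, v⟫_ℝ ^ 2) / ‖w‖ ^ 4) 0 := by
  have hinner := (hasDerivAt_line w v 0).inner ℝ (hasDerivAt_const 0 v)
  refine (hinner.fun_div (hasDerivAt_line w v 0).norm_sq (by simpa using hw)).congr_deriv ?_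
  simp only [zero_smul, add_zero, zero_add, inner_zero_right, real_inner_self_eq_norm_sq]
  ring

theorem hasDerivAt_comp_log_norm_line (hg : Differentiable ℝ g) {t : ℝ} (h : w + t • v ≠ 0) :
    HasDerivAt (fun t : ℝ => g (Real.log ‖w + t • v‖))
      (deriv g (Real.log ‖w + t • v‖) * (⟪w + t • v, v⟫_ℝ / ‖w + t • v‖ ^ 2)) t :=
  (hg _).hasDerivAt.comp t (hasDerivAt_log_norm_line h)

theorem eventually_hasDerivAt_comp_log_norm_line (hg : Differentiable ℝ g) (hw : w ≠ 0) :
    ∀ᶠ t in 𝓝 (0 : ℝ), HasDerivAt (fun t : ℝ => g (Real.log ‖w + t • v‖))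
      (deriv g (Real.log ‖w + t • v‖) * (⟪w + t • v, v⟫_ℝ / ‖w + t • v‖ ^ 2)) t :=
  ((hasDerivAt_line w v 0).continuousAt.eventually_ne (by simpa using hw)).mono fun _ ht =>
    hasDerivAt_comp_log_norm_line hg ht

theorem hasDerivAt_deriv_comp_log_norm_line (hg : Differentiable ℝ (deriv g)) (hw : w ≠ 0) :
    HasDerivAt (fun t : ℝ => deriv g (Real.log ‖w + t • v‖) * (⟪w + t • v, v⟫_ℝ / ‖w + t • v‖ ^ 2))
      (deriv (deriv g) (Real.log ‖w‖) * (⟪w, v⟫_ℝ / ‖w‖ ^ 2) ^ 2 +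
        deriv g (Real.log ‖w‖) * ((‖v‖ ^ 2 * ‖w‖ ^ 2 - 2 * ⟪w, v⟫_ℝ ^ 2) / ‖w‖ ^ 4)) 0 := by
  refine ((hasDerivAt_comp_log_norm_line (w := w) (v := v) hg (t := 0) (by simpa using hw)).mul
    (hasDerivAt_inner_div_norm_sq_line hw)).congr_deriv ?_
  simp only [zero_smul, add_zero]
  ring

theorem contDiffAt_comp_log_norm (hg : ContDiff ℝ 2 g) (hw : w ≠ 0) :
    ContDiffAt ℝ 2 (fun x => g (Real.log ‖x‖)) w :=
  hg.contDiffAt.comp w ((contDiffAt_norm ℝ hw).log (norm_ne_zero_iff.2 hw))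

theorem iteratedFDeriv_two_comp_log_norm (hg : ContDiff ℝ 2 g) (hw : w ≠ 0) :
    iteratedFDeriv ℝ 2 (fun x => g (Real.log ‖x‖)) w ![v, v] =
      deriv (deriv g) (Real.log ‖w‖) * (⟪w, v⟫_ℝ / ‖w‖ ^ 2) ^ 2 +
        deriv g (Real.log ‖w‖) * ((‖v‖ ^ 2 * ‖w‖ ^ 2 - 2 * ⟪w, v⟫_ℝ ^ 2) / ‖w‖ ^ 4) :=
  iteratedFDeriv_two_apply_self_eq_of_hasDerivAt (contDiffAt_comp_log_norm hg hw)
    (eventually_hasDerivAt_comp_log_norm_line (hg.differentiable two_ne_zero) hw)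
    (hasDerivAt_deriv_comp_log_norm_line ((hg.iterate_deriv' 1 1).differentiable one_ne_zero) hw)

theorem iteratedFDeriv_two_clm_mul_comp_log_norm (ℓ : V →L[ℝ] ℝ) (hg : ContDiff ℝ 2 g)
    (hw : w ≠ 0) :
    iteratedFDeriv ℝ 2 (fun x => ℓ x * g (Real.log ‖x‖)) w ![v, v] =
      2 * ℓ v * (deriv g (Real.log ‖w‖) * (⟪w, v⟫_ℝ / ‖w‖ ^ 2)) +
        ℓ w * (deriv (deriv g) (Real.log ‖w‖) * (⟪w, v⟫_ℝ / ‖w‖ ^ 2) ^ 2 +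
          deriv g (Real.log ‖w‖) * ((‖v‖ ^ 2 * ‖w‖ ^ 2 - 2 * ⟪w, v⟫_ℝ ^ 2) / ‖w‖ ^ 4)) := by
  have hg₁ : Differentiable ℝ g := hg.differentiable two_ne_zero
  have hℓ : ∀ t : ℝ, HasDerivAt (fun t : ℝ => ℓ (w + t • v)) (ℓ v) t := fun t =>
    ℓ.hasFDerivAt.comp_hasDerivAt t (hasDerivAt_line w v t)
  refine iteratedFDeriv_two_apply_self_eq_of_hasDerivAt
    (ℓ.contDiff.contDiffAt.mul (contDiffAt_comp_log_norm hg hw))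
    ((eventually_hasDerivAt_comp_log_norm_line hg₁ hw).mono fun t ht => (hℓ t).mul ht) ?_
  refine (((hasDerivAt_comp_log_norm_line hg₁ (t := 0) (by simpa using hw)).const_mul (ℓ v)).add
    ((hℓ 0).mul (hasDerivAt_deriv_comp_log_norm_line
      ((hg.iterate_deriv' 1 1).differentiable one_ne_zero) hw))).congr_deriv ?_
  simp only [zero_smul, add_zero]
  ring

end LogNorm

section LaplacianLogNorm

variable {g : ℝ → ℝ} {w : ℂ}

theorem laplacian_comp_log_norm (hg : ContDiff ℝ 2 g) (hw : w ≠ 0) :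
    Δ (fun z : ℂ => g (Real.log ‖z‖)) w = deriv (deriv g) (Real.log ‖w‖) / ‖w‖ ^ 2 := by
  have hN : ‖w‖ ^ 2 = w.re ^ 2 + w.im ^ 2 := by rw [Complex.sq_norm, Complex.normSq_apply]; ring
  have hN₀ : ‖w‖ ≠ 0 := norm_ne_zero_iff.2 hw
  rw [InnerProductSpace.laplacian_eq_iteratedFDeriv_complexPlane]
  dsimp only
  rw [iteratedFDeriv_two_comp_log_norm hg hw, iteratedFDeriv_two_comp_log_norm hg hw]
  simp only [Complex.inner, Complex.mul_re, Complex.conj_re, Complex.conj_im, Complex.one_re,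
    Complex.one_im, Complex.I_re, Complex.I_im, norm_one, Complex.norm_I]
  field_simp
  rw [hN]
  ring

theorem laplacian_re_mul_comp_log_norm (hg : ContDiff ℝ 2 g) (hw : w ≠ 0) :
    Δ (fun z : ℂ => z.re * g (Real.log ‖z‖)) w =
      w.re * (deriv (deriv g) (Real.log ‖w‖) + 2 * deriv g (Real.log ‖w‖)) / ‖w‖ ^ 2 := by
  have hN : ‖w‖ ^ 2 = w.re ^ 2 + w.im ^ 2 := by rw [Complex.sq_norm, Complex.normSq_apply]; ring
  have hN₀ : ‖w‖ ≠ 0 := norm_ne_zero_iff.2 hw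
  change Δ (fun z : ℂ => Complex.reCLM z * g (Real.log ‖z‖)) w = _
  rw [InnerProductSpace.laplacian_eq_iteratedFDeriv_complexPlane]
  dsimp only
  rw [iteratedFDeriv_two_clm_mul_comp_log_norm Complex.reCLM hg hw,
    iteratedFDeriv_two_clm_mul_comp_log_norm Complex.reCLM hg hw]
  simp only [Complex.reCLM_apply, Complex.inner, Complex.mul_re, Complex.conj_re,
    Complex.conj_im, Complex.one_re, Complex.one_im, Complex.I_re, Complex.I_im, norm_one,
    Complex.norm_I]
  field_simp
  rw [hN]
  ring

end LaplacianLogNorm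

theorem re_mul_add_two_mul_le (w : ℂ) (a b : ℝ) :
    w.re * (a + 2 * b) ≤ ‖w‖ * (|a| + 2 * |b|) :=
  calc w.re * (a + 2 * b) ≤ |w.re| * |a + 2 * b| := by rw [← abs_mul]; exact le_abs_self _
    _ ≤ ‖w‖ * (|a| + 2 * |b|) := by
      gcongr
      · exact Complex.abs_re_le_norm w
      · exact (abs_add_le _ _).trans (by rw [abs_mul, abs_two])

theorem h_subharmonic_general
    (φ : ℝ → ℝ) (hφsmooth : ContDiff ℝ (⊤ : ℕ∞) φ)
    (hφ0 : ∀ x ≤ (0:ℝ), φ x = 0)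
    (ψ : ℝ → ℝ) (hψsmooth : ContDiff ℝ 2 ψ)
    (hψ0 : ∀ x ≤ (0:ℝ), ψ x = 0)
    (hψ'' : ∀ x ≥ (0:ℝ),
      deriv (deriv ψ) x = Real.exp x * (|deriv (deriv φ) x| + 2 * |deriv φ x|))
    (h : ℂ → ℝ) (h0 : h 0 = 0)
    (hz : ∀ z : ℂ, z ≠ 0 → h z = ψ (Real.log ‖z‖) - z.re * φ (Real.log ‖z‖)) :
    Subharmonic h := by
  have hφ : ContDiff ℝ 2 φ := hφsmooth.of_le (WithTop.coe_le_coe.2 le_top)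
  have hreφ : ∀ w ≠ 0, ContDiffAt ℝ 2 (fun z : ℂ => z.re * φ (Real.log ‖z‖)) w := fun w hw =>
    Complex.reCLM.contDiff.contDiffAt.mul (contDiffAt_comp_log_norm hφ hw)
  have hh : ∀ w ≠ 0,
      h =ᶠ[𝓝 w] (fun z => ψ (Real.log ‖z‖)) - fun z => z.re * φ (Real.log ‖z‖) :=
    fun w hw => (eventually_ne_nhds hw).mono fun z hz₀ => hz z hz₀
  have hh₀ : ∀ w : ℂ, ‖w‖ < 1 → h =ᶠ[𝓝 w] fun _ => 0 := fun w hw =>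
    (continuous_norm.continuousAt.eventually_lt continuousAt_const hw).mono fun z hz₁ => by
      rcases eq_or_ne z 0 with rfl | hz₀
      · exact h0
      have hlog : Real.log ‖z‖ ≤ 0 := Real.log_nonpos (norm_nonneg z) hz₁.le
      simp [hz z hz₀, hψ0 _ hlog, hφ0 _ hlog]
  refine subharmonic_of_contDiff_of_laplacian_nonneg (contDiff_iff_contDiffAt.2 fun w => ?_)
    fun w => ?_
  · rcases eq_or_ne w 0 with rfl | hw
    · exact contDiffAt_const.congr_of_eventuallyEq (hh₀ 0 (by simp))
    · exact ((contDiffAt_comp_log_norm hψsmooth hw).sub (hreφ w hw)).congr_of_eventuallyEq (hh w hw)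
  rcases lt_or_ge ‖w‖ 1 with hw | hw
  · simp [(InnerProductSpace.laplacian_congr_nhds (hh₀ w hw)).eq_of_nhds]
  have hw₀ : w ≠ 0 := norm_pos_iff.1 (one_pos.trans_le hw)
  rw [(InnerProductSpace.laplacian_congr_nhds (hh w hw₀)).eq_of_nhds,
    (contDiffAt_comp_log_norm hψsmooth hw₀).laplacian_sub (hreφ w hw₀),
    laplacian_comp_log_norm hψsmooth hw₀, laplacian_re_mul_comp_log_norm hφ hw₀, ← sub_div,
    hψ'' _ (Real.log_nonneg hw), Real.exp_log (norm_pos_iff.2 hw₀)]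
  exact div_nonneg (sub_nonneg.2 (re_mul_add_two_mul_le w _ _)) (by positivity)

/-- Let `φ : ℝ → ℝ` be nondecreasing, `C^∞`, with `φ = 0` on `(-∞,0]` and
`φ = 1` on `[1,∞)`; let `ψ : ℝ → ℝ` be `C²` with `ψ = 0` on `(-∞,0]` and
`ψ'' = eˣ(|φ''| + 2|φ'|)` on `[0,∞)`. Then `h(z) = ψ(log|z|) − (Re z) φ(log|z|)` (with
`h(0) = 0`) is subharmonic on `ℂ`. -/
theorem h_subharmonic
    (φ : ℝ → ℝ) (hφmono : Monotone φ) (hφsmooth : ContDiff ℝ (⊤ : ℕ∞) φ)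
    (hφ0 : ∀ x ≤ (0:ℝ), φ x = 0) (hφ1 : ∀ x ≥ (1:ℝ), φ x = 1)
    (ψ : ℝ → ℝ) (hψsmooth : ContDiff ℝ 2 ψ)
    (hψ0 : ∀ x ≤ (0:ℝ), ψ x = 0)
    (hψ'' : ∀ x ≥ (0:ℝ),
      deriv (deriv ψ) x = Real.exp x * (|deriv (deriv φ) x| + 2 * |deriv φ x|))
    (h : ℂ → ℝ) (h0 : h 0 = 0)
    (hz : ∀ z : ℂ, z ≠ 0 → h z = ψ (Real.log ‖z‖) - z.re * φ (Real.log ‖z‖)) :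
    Subharmonic h :=
  h_subharmonic_general φ hφsmooth hφ0 ψ hψsmooth hψ0 hψ'' h h0 hz

end
end
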